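/- Let G be a bipartite graph on n vertices with bipartition {V1, V2} where |V1| = |V2| = n/2, and suppose G contains no path with k edges. Then there exist X1 ⊆ V1 and X2 ⊆ V2 with |X1| = |X2| >= (n - k)/4 such that G has no edges between X1 and X2. -/

import Mathlib

open SimpleGraph

namespace MonoCyclePartitions

variable {V : Type*}

/-- `conCount H l x y` is the number of paths of length `l + 1` (equivalently, with `l`
internal vertices) between `x` and `y` in the graph `H`. -/
noncomputable def conCount (H : SimpleGraph V) (l : ℕ) (x y : V) : ℕ :=
  Nat.card {p : H.Walk x y // p.IsPath ∧ p.length = l + 1}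

/-- The bipartite graph consisting of the edges of `H` with one end in `X` and the other in `Y`. -/
def between (H : SimpleGraph V) (X Y : Set V) : SimpleGraph V where
  Adj u v := H.Adj u v ∧ ((u ∈ X ∧ v ∈ Y) ∨ (u ∈ Y ∧ v ∈ X))
  symm := ⟨fun u v h => ⟨h.1.symm, by tauto⟩⟩
  loopless := ⟨fun v h => H.loopless.irrefl v h.1⟩

/-- A subgraph `F` of a graph `G` on `n` vertices is `(α, k)`-strongly robust if there is a
positive integer `l ≤ k` such that every two vertices of `F` are joined by at least `α * n ^ l`
paths of length `l + 1` in `F`. -/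
def StronglyRobust [Fintype V] {G : SimpleGraph V} (F : G.Subgraph) (α : ℝ) (k : ℕ) : Prop :=
  ∃ l : ℕ, 1 ≤ l ∧ l ≤ k ∧ ∀ x ∈ F.verts, ∀ y ∈ F.verts,
    α * (Fintype.card V : ℝ) ^ l ≤ (conCount F.spanningCoe l x y : ℝ)

/-- `F` is `(α, k)`-weakly robust, witnessed by the bipartition `{X, Y}` of its vertex set. -/
def WeaklyRobustWith [Fintype V] {G : SimpleGraph V} (F : G.Subgraph) (X Y : Set V)
    (α : ℝ) (k : ℕ) : Prop :=
  X ∪ Y = F.verts ∧ Disjoint X Y ∧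
  ∃ l : ℕ, 1 ≤ l ∧ l ≤ k ∧ ∀ x ∈ X, ∀ y ∈ Y,
    α * (Fintype.card V : ℝ) ^ l ≤ (conCount (between F.spanningCoe X Y) l x y : ℝ)

def WeaklyRobust [Fintype V] {G : SimpleGraph V} (F : G.Subgraph) (α : ℝ) (k : ℕ) : Prop :=
  ∃ X Y : Set V, WeaklyRobustWith F X Y α k

def Robust [Fintype V] {G : SimpleGraph V} (F : G.Subgraph) (α : ℝ) (k : ℕ) : Prop :=
  StronglyRobust F α k ∨ WeaklyRobust F α k

/-- `F` is a subgraph of the graph `H` (as graphs on the same vertex type). -/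
def SubgraphOf {G : SimpleGraph V} (F : G.Subgraph) (H : SimpleGraph V) : Prop :=
  ∀ ⦃u v⦄, F.Adj u v → H.Adj u v

/-- The subgraph of `G` consisting of the edges of `H` (that lie in `G`) inside the set `S`;
when `H ≤ G` this is the graph `H` restricted to `S`, viewed as a subgraph of `G`. -/
def restrictSubgraph (G H : SimpleGraph V) (S : Set V) : G.Subgraph where
  verts := S
  Adj u v := H.Adj u v ∧ G.Adj u v ∧ u ∈ S ∧ v ∈ S
  adj_sub h := h.2.1
  edge_vert h := h.2.2.1
  symm := ⟨fun u v h => ⟨h.1.symm, h.2.1.symm, h.2.2.2, h.2.2.1⟩⟩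

/-- The graph `H` restricted to `S` has a Hamilton cycle, where by convention the empty set,
a single vertex and an edge count as (degenerate) cycles. -/
def HasDegenHamCycleOn [DecidableEq V] (H : SimpleGraph V) (S : Set V) : Prop :=
  S = ∅ ∨ (∃ v, S = {v}) ∨ (∃ u v, H.Adj u v ∧ S = {u, v}) ∨
    ∃ (x : S) (c : (H.induce S).Walk x x), c.IsHamiltonianCycle

/-- The vertex set can be partitioned into a cycle of `GR` and a cycle of `GB`
(allowing degenerate cycles). -/
def RedBlueCyclePartition [DecidableEq V] (GR GB : SimpleGraph V) : Prop :=
  ∃ VR VB : Set V, Disjoint VR VB ∧ VR ∪ VB = Set.univ ∧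
    HasDegenHamCycleOn GR VR ∧ HasDegenHamCycleOn GB VB

/-- The induced subgraph of `H` on `S` has a Hamilton path (with the convention that the
empty graph and one-vertex graphs have one). -/
def HasHamPathOn [DecidableEq V] (H : SimpleGraph V) (S : Set V) : Prop :=
  S = ∅ ∨ ∃ (a b : S) (p : (H.induce S).Walk a b), p.IsHamiltonian

/-- The number of neighbours of `v` in `A`, in the graph `H`. -/
noncomputable def degIn (H : SimpleGraph V) (v : V) (A : Set V) : ℕ :=
  (H.neighborSet v ∩ A).ncard

/-- The degree of `v` in the graph `H`. -/
noncomputable def deg (H : SimpleGraph V) (v : V) : ℕ :=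
  (H.neighborSet v).ncard

/-- The number of edges of `H` with one end in `A` and the other in `B`. -/
noncomputable def edgesBetween (H : SimpleGraph V) (A B : Set V) : ℕ :=
  {e ∈ H.edgeSet | ∃ u v, u ∈ A ∧ v ∈ B ∧ e = s(u, v)}.ncard

/-- The number of edges of `H` with both ends in `A`. -/
noncomputable def edgesWithin (H : SimpleGraph V) (A : Set V) : ℕ :=
  {e ∈ H.edgeSet | ∀ v ∈ e, v ∈ A}.ncard

/-- `A` is an independent set of `H`. -/
def IsIndep (H : SimpleGraph V) (A : Set V) : Prop :=
  ∀ u ∈ A, ∀ v ∈ A, ¬ H.Adj u v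

/-- The set of vertices with a neighbour in `A`. -/
def NSet (H : SimpleGraph V) (A : Set V) : Set V :=
  {v | ∃ u ∈ A, H.Adj u v}

/-- `H` is 2-connected: it is connected, has at least 3 vertices, and stays connected after
deleting any single vertex. -/
def TwoConnected [Fintype V] (H : SimpleGraph V) : Prop :=
  H.Connected ∧ 3 ≤ Fintype.card V ∧ ∀ v : V, (H.induce ({v}ᶜ : Set V)).Connected


/-! Depth-first search. At every moment the finished vertices `S` have no neighbours among the
unvisited ones, and the stack spans a path, so it has at most `k` vertices, at most `k / 2` of
them in `V2` when its top lies in `V1`. Stop the first time `S` contains `q = ⌈(n - k) / 4⌉`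
vertices of one side, say of `V1` (the vertex just popped then lies in `V1`).
Then `S` has fewer than `q` vertices in `V2`, so at least `n / 2 - (q - 1) - k / 2 ≥ q` vertices
of `V2` are unvisited, and none of them is adjacent to the `q` finished vertices of `V1`. -/

section

variable {G : SimpleGraph V} {S : Finset V} {l : List V} {u v : V}

/-- `S` is the set of finished vertices and `l` the stack, top first. -/
structure IsDFSState (G : SimpleGraph V) (S : Finset V) (l : List V) : Prop where
  isChain : l.IsChain G.Adj
  nodup : l.Nodup
  notMem_of_mem : ∀ x ∈ l, x ∉ S
  closed : ∀ x ∈ S, ∀ y, G.Adj x y → y ∈ S ∨ y ∈ l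

theorem isDFSState_empty (G : SimpleGraph V) : IsDFSState G ∅ [] :=
  ⟨.nil, List.nodup_nil, by simp, by simp⟩

theorem IsDFSState.push (h : IsDFSState G S l) (huS : u ∉ S) (hul : u ∉ l)
    (hadj : ∀ w ∈ l.head?, G.Adj u w) : IsDFSState G S (u :: l) where
  isChain := List.isChain_cons.2 ⟨hadj, h.isChain⟩
  nodup := List.nodup_cons.2 ⟨hul, h.nodup⟩
  notMem_of_mem := by simpa [huS] using h.notMem_of_mem
  closed x hx y hxy := (h.closed x hx y hxy).imp_right (List.mem_cons_of_mem u)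

theorem IsDFSState.pop [DecidableEq V] (h : IsDFSState G S (v :: l))
    (hv : ∀ u, G.Adj v u → u ∈ S ∨ u ∈ v :: l) : IsDFSState G (insert v S) l where
  isChain := h.isChain.tail
  nodup := h.nodup.of_cons
  notMem_of_mem x hx := by
    have := h.notMem_of_mem x (List.mem_cons_of_mem v hx)
    have := (List.nodup_cons.1 h.nodup).1
    grind
  closed x hx y hxy := by
    rcases Finset.mem_insert.1 hx with rfl | hx
    · have := G.loopless.irrefl x
      grind
    · have := h.closed x hx y hxy
      grind

theorem IsDFSState.length_add_card_le [Fintype V] [DecidableEq V] (h : IsDFSState G S l) :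
    l.length + S.card ≤ Fintype.card V := by
  have hdisj : Disjoint l.toFinset S :=
    Finset.disjoint_left.2 fun x hx => h.notMem_of_mem x (List.mem_toFinset.1 hx)
  rw [← List.toFinset_card_of_nodup h.nodup, ← Finset.card_union_of_disjoint hdisj]
  exact Finset.card_le_univ _

/-- Since the finished set grows one vertex at a time, it first satisfies `P` at a pop. -/
theorem IsDFSState.exists_pop_crossing [Fintype V] [DecidableEq V] (P : Finset V → Prop)
    (hP : P Finset.univ) (h : IsDFSState G S l) (hS : ¬ P S) :
    ∃ S v l, IsDFSState G S (v :: l) ∧ (∀ u, G.Adj v u → u ∈ S ∨ u ∈ v :: l) ∧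
      ¬ P S ∧ P (insert v S) := by
  induction hm : 2 * (Fintype.card V - S.card) - l.length using Nat.strong_induction_on
    generalizing S l with
  | _ m ih =>
    have hlen := h.length_add_card_le
    cases l with
    | nil =>
      obtain ⟨u, huS⟩ : ∃ u, u ∉ S := by
        by_contra! hall
        exact hS (Finset.eq_univ_of_forall hall ▸ hP)
      have h' := h.push huS List.not_mem_nil (by simp)
      have := h'.length_add_card_le
      exact ih _ (by simp only [List.length_cons, List.length_nil] at *; omega) h' hS rfl
    | cons v l =>
      by_cases hex : ∃ u, G.Adj v u ∧ u ∉ S ∧ u ∉ v :: l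
      · obtain ⟨u, hvu, huS, hul⟩ := hex
        have h' := h.push huS hul (by simpa using hvu.symm)
        have := h'.length_add_card_le
        exact ih _ (by simp only [List.length_cons] at *; omega) h' hS rfl
      · have hv : ∀ u, G.Adj v u → u ∈ S ∨ u ∈ v :: l := fun u hvu =>
          or_iff_not_imp_left.2 fun huS => by_contra fun hul => hex ⟨u, hvu, huS, hul⟩
        by_cases hPv : P (insert v S)
        · exact ⟨S, v, l, h, hv, hS, hPv⟩
        · have hcard := Finset.card_insert_of_notMem (h.notMem_of_mem v List.mem_cons_self)
          exact ih _ (by simp only [List.length_cons] at *; omega) (h.pop hv) hPv rfl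

theorem length_le_of_isChain {k : ℕ}
    (hk : ¬ ∃ (a b : V) (p : G.Walk a b), p.IsPath ∧ p.length = k)
    (hc : l.IsChain G.Adj) (hnd : l.Nodup) : l.length ≤ k := by
  by_contra! hlt
  have hne : l.take (k + 1) ≠ [] := by rw [← List.length_pos_iff, List.length_take]; omega
  refine hk ⟨_, _, Walk.ofSupport _ hne (hc.take _), ?_, ?_⟩
  · rw [Walk.isPath_def, Walk.support_ofSupport]
    exact hnd.sublist (List.take_sublist _ _)
  · simp only [Walk.length_ofSupport, List.length_take]
    omega

theorem card_toFinset_inter_le_of_isChain [DecidableEq V] {A B : Finset V}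
    (hG : G.IsBipartiteWith A B) :
    ∀ {l : List V}, l.IsChain G.Adj → (∀ a ∈ l.head?, a ∈ A) →
      (l.toFinset ∩ B).card ≤ l.length / 2
  | [], _, _ => by simp
  | [a], _, ha => by
    have : a ∉ B := Set.disjoint_left.1 hG.disjoint (ha a rfl)
    simp [this]
  | a :: b :: l, hc, ha => by
    have hb : b ∈ B := hG.mem_of_mem_adj (ha a rfl) hc.rel
    have hl : ∀ c ∈ l.head?, c ∈ A := by
      cases l with
      | nil => simp
      | cons c l => simpa using hG.symm.mem_of_mem_adj hb hc.of_cons.rel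
    have ih := card_toFinset_inter_le_of_isChain hG hc.of_cons.of_cons hl
    have ha' : a ∉ B := Set.disjoint_left.1 hG.disjoint (ha a rfl)
    calc ((a :: b :: l).toFinset ∩ B).card ≤ (insert b (l.toFinset ∩ B)).card :=
          Finset.card_le_card fun x => by
            simp only [List.toFinset_cons, Finset.mem_inter, Finset.mem_insert]; grind
      _ ≤ (l.toFinset ∩ B).card + 1 := Finset.card_insert_le _ _
      _ ≤ (a :: b :: l).length / 2 := by simp only [List.length_cons]; omega

theorem IsDFSState.exists_nonadj_of_pop [DecidableEq V] {A B : Finset V}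
    (hG : G.IsBipartiteWith A B) {k : ℕ}
    (hk : ¬ ∃ (a b : V) (p : G.Walk a b), p.IsPath ∧ p.length = k) {q : ℕ}
    (hq : 2 * q + k / 2 ≤ B.card + 1) (h : IsDFSState G S (v :: l))
    (hv : ∀ u, G.Adj v u → u ∈ S ∨ u ∈ v :: l) (hvA : v ∈ A)
    (hSB : (S ∩ B).card < q) (hSA : q ≤ (insert v S ∩ A).card) :
    ∃ X ⊆ A, ∃ Y ⊆ B, X.card = q ∧ Y.card = q ∧ ∀ x ∈ X, ∀ y ∈ Y, ¬ G.Adj x y := by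
  have hstack : ((v :: l).toFinset ∩ B).card ≤ k / 2 :=
    (card_toFinset_inter_le_of_isChain hG h.isChain (by simpa using hvA)).trans
      (Nat.div_le_div_right (length_le_of_isChain hk h.isChain h.nodup))
  have hunvisited : q ≤ (B \ (S ∪ (v :: l).toFinset)).card := by
    have := Finset.card_union_le (S ∩ B) ((v :: l).toFinset ∩ B)
    rw [Finset.card_sdiff, Finset.union_inter_distrib_right]
    omega
  obtain ⟨X, hXS, hX⟩ := Finset.exists_subset_card_eq hSA
  obtain ⟨Y, hYT, hY⟩ := Finset.exists_subset_card_eq hunvisited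
  refine ⟨X, hXS.trans Finset.inter_subset_right, Y, hYT.trans Finset.sdiff_subset, hX, hY, ?_⟩
  intro x hx y hy hxy
  have hyS := (h.pop hv).closed x (Finset.inter_subset_left (hXS hx)) y hxy
  have hyT := (Finset.mem_sdiff.1 (hYT hy)).2
  simp only [Finset.mem_insert, Finset.mem_union, List.mem_toFinset, List.mem_cons] at hyS hyT
  tauto

theorem exists_nonadj_of_isBipartiteWith [Fintype V] [DecidableEq V] {A B : Finset V}
    (hG : G.IsBipartiteWith A B) {k : ℕ}
    (hk : ¬ ∃ (a b : V) (p : G.Walk a b), p.IsPath ∧ p.length = k) {q : ℕ}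
    (hA : 2 * q + k / 2 ≤ A.card + 1) (hB : 2 * q + k / 2 ≤ B.card + 1) :
    ∃ X ⊆ A, ∃ Y ⊆ B, X.card = q ∧ Y.card = q ∧ ∀ x ∈ X, ∀ y ∈ Y, ¬ G.Adj x y := by
  rcases q.eq_zero_or_pos with rfl | hq
  · exact ⟨∅, Finset.empty_subset _, ∅, Finset.empty_subset _, rfl, rfl, by simp⟩
  obtain ⟨S, v, l, h, hv, hS, hPv⟩ := (isDFSState_empty G).exists_pop_crossing
    (fun S => q ≤ (S ∩ A).card ∨ q ≤ (S ∩ B).card) (by simp only [Finset.univ_inter]; omega)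
    (by simp only [Finset.empty_inter, Finset.card_empty]; omega)
  simp only [not_or, not_le] at hS
  by_cases hvA : v ∈ A
  · have hvB : v ∉ B := Set.disjoint_left.1 hG.disjoint hvA
    refine h.exists_nonadj_of_pop hG hk hB hv hvA hS.2 (hPv.resolve_right ?_)
    rw [Finset.insert_inter_of_notMem hvB]
    omega
  · rw [Finset.insert_inter_of_notMem hvA] at hPv
    have hvB : v ∈ B := by
      by_contra hvB
      rw [Finset.insert_inter_of_notMem hvB] at hPv
      omega
    obtain ⟨Y, hY, X, hX, hYc, hXc, hXY⟩ :=
      h.exists_nonadj_of_pop hG.symm hk hA hv hvB hS.1 (hPv.resolve_left (by omega))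
    exact ⟨X, hX, Y, hY, hXc, hYc, fun x hx y hy hxy => hXY y hy x hx hxy.symm⟩

end

theorem statement_6 (n k : ℕ) (G : SimpleGraph (Fin n)) (V1 V2 : Set (Fin n))
    (hdisj : Disjoint V1 V2) (hcover : V1 ∪ V2 = Set.univ) (hbal : V1.ncard = V2.ncard)
    (hbip : ∀ u v, G.Adj u v → (u ∈ V1 ∧ v ∈ V2) ∨ (u ∈ V2 ∧ v ∈ V1))
    (hnopath : ¬ ∃ (a b : Fin n) (p : G.Walk a b), p.IsPath ∧ p.length = k) :
    ∃ X1 ⊆ V1, ∃ X2 ⊆ V2, X1.ncard = X2.ncard ∧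
      ((n : ℝ) - k) / 4 ≤ (X1.ncard : ℝ) ∧
      ∀ u ∈ X1, ∀ v ∈ X2, ¬ G.Adj u v := by
  classical
  rcases le_or_gt n k with hnk | hkn
  · refine ⟨∅, Set.empty_subset _, ∅, Set.empty_subset _, rfl, ?_, by simp⟩
    have : (n : ℝ) ≤ k := by exact_mod_cast hnk
    simp only [Set.ncard_empty, Nat.cast_zero]
    linarith
  have hG : G.IsBipartiteWith ↑V1.toFinset ↑V2.toFinset := by
    simpa only [Set.coe_toFinset] using (⟨hdisj, hbip⟩ : G.IsBipartiteWith V1 V2)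
  have hn := Set.ncard_union_eq hdisj
  rw [hcover, Set.ncard_univ, Nat.card_fin] at hn
  rw [Set.ncard_eq_toFinset_card', Set.ncard_eq_toFinset_card'] at hbal hn
  obtain ⟨X1, hX1, X2, hX2, hc1, hc2, hX⟩ :=
    exists_nonadj_of_isBipartiteWith hG hnopath (q := (n - k + 3) / 4) (by omega) (by omega)
  refine ⟨X1, by simpa using Finset.coe_subset.2 hX1, X2, by simpa using Finset.coe_subset.2 hX2,
    by simp [hc1, hc2], ?_, hX⟩
  have : (n : ℝ) ≤ 4 * ((n - k + 3) / 4 : ℕ) + k := by exact_mod_cast (by omega : n ≤ _)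
  rw [Set.ncard_coe_finset, hc1]
  linarith

end MonoCyclePartitions
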